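/- arXiv:2402.03475 — 3 statements merged into one kernel-verified Lean document; each statement's English description precedes it below -/
import Mathlib

section
/- Let (a_n)_{n≥1} be nonnegative real numbers, N(x) = ∑_{n < x} a_n, N_0 = N and N_{k+1}(x) = ∫_0^x N_k(u) du. Then for every k ≥ 1, every y > 0 and every X ∈ ℝ, y^{-k}·Δ_y^{(k)} N_k(X − ky) ≤ N(X) ≤ y^{-k}·Δ_y^{(k)} N_k(X). -/
/-!
Writing `I g (x) = ∫₀ˣ g`, one has `Δ_y (I g)(x) = ∫ₓ^{x+y} g`, and since `Δ_y` commutes with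
translations, `Δ_y^{(k+1)} (I g)(x) = ∫ₓ^{x+y} Δ_y^{(k)} g`. By induction, `Δ_y^{(k)} N_k(x)` is
`y^k` times an average of `N` over `[x, x + ky]`; as `N` is monotone, it lies between `y^k N(x)`
and `y^k N(x + ky)`.
-/

noncomputable section

/-- The forward difference operator `Δ_y f (x) = f(x + y) - f(x)`. -/
def fwdDiffR (y : ℝ) (f : ℝ → ℝ) : ℝ → ℝ := fun x => f (x + y) - f x

/-- The summatory function `N(x) = ∑_{n < x} a_n` (with `N(x) = 0` for `x ≤ 1`). -/
noncomputable def partialSumR (a : ℕ → ℝ) (x : ℝ) : ℝ := ∑ n ∈ Finset.Ico 1 ⌈x⌉₊, a n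

/-- Iterated integrals `N_0 = f`, `N_{k+1}(x) = ∫_0^x N_k(u) du`. -/
noncomputable def iterIntR (f : ℝ → ℝ) : ℕ → ℝ → ℝ
  | 0 => f
  | k + 1 => fun x => ∫ u in (0:ℝ)..x, iterIntR f k u

open MeasureTheory intervalIntegral

lemma fwdDiffR_iterate_succ_apply (y : ℝ) (f : ℝ → ℝ) (k : ℕ) (x : ℝ) :
    (fwdDiffR y)^[k + 1] f x = (fwdDiffR y)^[k] f (x + y) - (fwdDiffR y)^[k] f x := by
  rw [Function.iterate_succ_apply']
  rfl

lemma intervalIntegrable_comp_add_right {g : ℝ → ℝ}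
    (hg : ∀ a b, IntervalIntegrable g volume a b) (y : ℝ) :
    ∀ a b, IntervalIntegrable (fun x => g (x + y)) volume a b := fun a b => by
  simpa using (hg (a + y) (b + y)).comp_add_right y

lemma intervalIntegrable_fwdDiffR_iterate {g : ℝ → ℝ}
    (hg : ∀ a b, IntervalIntegrable g volume a b) (y : ℝ) (k : ℕ) :
    ∀ a b, IntervalIntegrable ((fwdDiffR y)^[k] g) volume a b := by
  induction k with
  | zero => exact hg
  | succ n ih =>
    intro a b
    rw [Function.iterate_succ_apply']
    exact (intervalIntegrable_comp_add_right ih y a b).sub (ih a b)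

lemma fwdDiffR_primitive {g : ℝ → ℝ} (hg : ∀ a b, IntervalIntegrable g volume a b)
    (y x : ℝ) :
    fwdDiffR y (fun t => ∫ u in (0 : ℝ)..t, g u) x = ∫ u in x..x + y, g u :=
  integral_interval_sub_left (hg 0 (x + y)) (hg 0 x)

lemma fwdDiffR_iterate_succ_primitive {g : ℝ → ℝ}
    (hg : ∀ a b, IntervalIntegrable g volume a b) (y : ℝ) (k : ℕ) (x : ℝ) :
    (fwdDiffR y)^[k + 1] (fun t => ∫ u in (0 : ℝ)..t, g u) x
      = ∫ u in x..x + y, (fwdDiffR y)^[k] g u := by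
  induction k generalizing x with
  | zero => exact fwdDiffR_primitive hg y x
  | succ n ih =>
    have hG := intervalIntegrable_fwdDiffR_iterate hg y n
    rw [fwdDiffR_iterate_succ_apply, ih, ih, ← integral_comp_add_right,
      ← integral_sub (intervalIntegrable_comp_add_right hG y _ _) (hG _ _)]
    exact integral_congr fun u _ => (fwdDiffR_iterate_succ_apply y g n u).symm

lemma intervalIntegrable_iterIntR {f : ℝ → ℝ} (hf : ∀ a b, IntervalIntegrable f volume a b) :
    ∀ k a b, IntervalIntegrable (iterIntR f k) volume a b
  | 0 => hf
  | k + 1 => (continuous_primitive (intervalIntegrable_iterIntR hf k) 0).intervalIntegrable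

lemma fwdDiffR_iterate_iterIntR_mem_Icc {f : ℝ → ℝ} (hf : Monotone f) {y : ℝ} (hy : 0 ≤ y)
    (k : ℕ) (x : ℝ) :
    (fwdDiffR y)^[k] (iterIntR f k) x ∈ Set.Icc (y ^ k * f x) (y ^ k * f (x + k * y)) := by
  induction k generalizing x with
  | zero => simp [iterIntR]
  | succ n ih =>
    have hint := intervalIntegrable_iterIntR (fun a b => hf.intervalIntegrable) n
    have hG := intervalIntegrable_fwdDiffR_iterate hint y n x (x + y)
    have hxy : x ≤ x + y := by linarith
    have hyn : 0 ≤ y ^ n := pow_nonneg hy n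
    rw [iterIntR, fwdDiffR_iterate_succ_primitive hint]
    constructor
    · calc y ^ (n + 1) * f x = ∫ _ in x..x + y, y ^ n * f x := by
            rw [intervalIntegral.integral_const, smul_eq_mul, add_sub_cancel_left]; ring
        _ ≤ _ := integral_mono_on hxy intervalIntegrable_const hG fun u hu =>
          (mul_le_mul_of_nonneg_left (hf hu.1) hyn).trans (ih u).1
    · calc _ ≤ ∫ _ in x..x + y, y ^ n * f (x + (n + 1 : ℕ) * y) :=
            integral_mono_on hxy hG intervalIntegrable_const fun u hu =>
              (ih u).2.trans (mul_le_mul_of_nonneg_left (hf (by push_cast; linarith [hu.2])) hyn)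
        _ = _ := by rw [intervalIntegral.integral_const, smul_eq_mul, add_sub_cancel_left]; push_cast; ring

lemma partialSumR_mono {a : ℕ → ℝ} (ha : ∀ n, 0 ≤ a n) : Monotone (partialSumR a) :=
  fun _ _ hle => Finset.sum_le_sum_of_subset_of_nonneg
    (Finset.Ico_subset_Ico le_rfl (Nat.ceil_le_ceil hle)) fun n _ _ => ha n

theorem statement11_general (a : ℕ → ℝ) (ha : ∀ n, 0 ≤ a n) (k : ℕ)
    (y : ℝ) (hy : 0 < y) (X : ℝ) :
    (y ^ k)⁻¹ * (fwdDiffR y)^[k] (iterIntR (partialSumR a) k) (X - k * y) ≤ partialSumR a X ∧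
    partialSumR a X ≤ (y ^ k)⁻¹ * (fwdDiffR y)^[k] (iterIntR (partialSumR a) k) X := by
  have hbd := fwdDiffR_iterate_iterIntR_mem_Icc (partialSumR_mono ha) hy.le k
  have hyk : 0 < y ^ k := pow_pos hy k
  rw [inv_mul_eq_div, inv_mul_eq_div, div_le_iff₀' hyk, le_div_iff₀' hyk]
  refine ⟨?_, (hbd X).1⟩
  simpa using (hbd (X - k * y)).2

theorem statement11 (a : ℕ → ℝ) (ha : ∀ n, 0 ≤ a n) (k : ℕ) (hk : 1 ≤ k)
    (y : ℝ) (hy : 0 < y) (X : ℝ) :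
    (y ^ k)⁻¹ * (fwdDiffR y)^[k] (iterIntR (partialSumR a) k) (X - k * y) ≤ partialSumR a X ∧
    partialSumR a X ≤ (y ^ k)⁻¹ * (fwdDiffR y)^[k] (iterIntR (partialSumR a) k) X :=
  statement11_general a ha k y hy X

end
end

section
/- Let (a_n)_{n≥1} be complex numbers and (â_n)_{n≥1} real numbers with |a_n| ≤ â_n for all n. Let N(x) = ∑_{n < x} a_n and N̂(x) = ∑_{n < x} â_n, with iterated integrals N_k and N̂_k defined by N_0 = N, N_{k+1}(x) = ∫_0^x N_k(u) du (and likewise for N̂). Then for every k ≥ 1, every y > 0 and every X ∈ ℝ, |y^{-k}·Δ_y^{(k)} N_k(X) − N(X)| ≤ y^{-k}·Δ_y^{(k)} N̂_k(X) − N̂(X). -/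
noncomputable section

/-- The forward difference operator `Δ_y f (x) = f(x + y) - f(x)` (complex-valued). -/
def fwdDiffC (y : ℝ) (f : ℝ → ℂ) : ℝ → ℂ := fun x => f (x + y) - f x

/-- The summatory function `N(x) = ∑_{n < x} a_n` (complex coefficients). -/
noncomputable def partialSumC (a : ℕ → ℂ) (x : ℝ) : ℂ := ∑ n ∈ Finset.Ico 1 ⌈x⌉₊, a n

/-- Iterated integrals `N_0 = f`, `N_{k+1}(x) = ∫_0^x N_k(u) du` (complex-valued). -/
noncomputable def iterIntC (f : ℝ → ℂ) : ℕ → ℝ → ℂ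
  | 0 => f
  | k + 1 => fun x => ∫ u in (0:ℝ)..x, iterIntC f k u

/-!
With `A_y g (x) = y⁻¹ ∫₀^y g (x + t) dt`, one has `Δ_y N_{k+1} = y · A_y N_k`, and `Δ_y` commutes
with `A_y`; hence `y^{-(k+1)} Δ_y^{(k+1)} N_{k+1} = A_y (y^{-k} Δ_y^{(k)} N_k)`. The estimate then
follows by induction on `k`: `A_y` only averages over points to the right of `X`, and for
`X ≤ Z` the increment `N(Z) - N(X)` is dominated in norm by `N̂(Z) - N̂(X)`.
-/

open MeasureTheory intervalIntegral

section LocallyIntervalIntegrable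

variable {E : Type*} [NormedAddCommGroup E]

def LocallyIntervalIntegrable (f : ℝ → E) : Prop :=
  ∀ a b : ℝ, IntervalIntegrable f volume a b

namespace LocallyIntervalIntegrable

variable {f : ℝ → E}

theorem comp_add_right (hf : LocallyIntervalIntegrable f) (c : ℝ) :
    LocallyIntervalIntegrable fun x => f (x + c) :=
  fun a b => by simpa using (hf (a + c) (b + c)).comp_add_right c

theorem comp_add_left (hf : LocallyIntervalIntegrable f) (c : ℝ) :
    LocallyIntervalIntegrable fun x => f (c + x) := by
  simpa only [add_comm c] using hf.comp_add_right c

theorem fwdDiff (hf : LocallyIntervalIntegrable f) (h : ℝ) :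
    LocallyIntervalIntegrable (_root_.fwdDiff h f) :=
  fun a b => ((hf.comp_add_right h) a b).sub (hf a b)

theorem fwdDiff_iter (hf : LocallyIntervalIntegrable f) (h : ℝ) (k : ℕ) :
    LocallyIntervalIntegrable ((_root_.fwdDiff h)^[k] f) := by
  induction k with
  | zero => exact hf
  | succ k ih => rw [Function.iterate_succ_apply']; exact ih.fwdDiff h

theorem smul [NormedSpace ℝ E] (hf : LocallyIntervalIntegrable f) (c : ℝ) :
    LocallyIntervalIntegrable (c • f) :=
  fun a b => (hf a b).smul c

end LocallyIntervalIntegrable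

theorem locallyIntervalIntegrable_comp_ceil (S : ℕ → E) :
    LocallyIntervalIntegrable fun x : ℝ => S ⌈x⌉₊ := by
  intro a b
  rw [intervalIntegrable_iff]
  refine Measure.integrableOn_of_bounded (M := ∑ m ∈ Finset.range (⌈max a b⌉₊ + 1), ‖S m‖)
    measure_Ioc_lt_top.ne ?_ ?_
  · exact (StronglyMeasurable.of_discrete.comp_measurable Nat.measurable_ceil).aestronglyMeasurable
  · filter_upwards [ae_restrict_mem measurableSet_uIoc] with x hx
    refine Finset.single_le_sum (f := fun m => ‖S m‖) (fun _ _ => norm_nonneg _) ?_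
    exact Finset.mem_range.2 (Nat.lt_succ_of_le (Nat.ceil_mono hx.2))

end LocallyIntervalIntegrable

section IteratedIntegral

variable {E : Type*} [NormedAddCommGroup E] [NormedSpace ℝ E]

def iterInt (f : ℝ → E) : ℕ → ℝ → E
  | 0 => f
  | k + 1 => fun x => ∫ u in (0:ℝ)..x, iterInt f k u

theorem iterIntR_eq_iterInt (f : ℝ → ℝ) (k : ℕ) : iterIntR f k = iterInt f k := by
  induction k with
  | zero => rfl
  | succ k ih => funext x; simp only [iterIntR, iterInt, ih]

theorem iterIntC_eq_iterInt (f : ℝ → ℂ) (k : ℕ) : iterIntC f k = iterInt f k := by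
  induction k with
  | zero => rfl
  | succ k ih => funext x; simp only [iterIntC, iterInt, ih]

variable {f g : ℝ → E}

theorem LocallyIntervalIntegrable.iterInt (hf : LocallyIntervalIntegrable f) (k : ℕ) :
    LocallyIntervalIntegrable (_root_.iterInt f k) := by
  induction k with
  | zero => exact hf
  | succ k ih => exact fun a b => (continuous_primitive ih 0).intervalIntegrable a b

theorem fwdDiff_iterInt_succ (hf : LocallyIntervalIntegrable f) (y : ℝ) (k : ℕ) :
    fwdDiff y (iterInt f (k + 1)) = fun x => ∫ t in (0:ℝ)..y, iterInt f k (x + t) := by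
  funext x
  have hk := hf.iterInt k
  simp only [fwdDiff, iterInt]
  rw [intervalIntegral.integral_comp_add_left, add_zero,
    ← integral_add_adjacent_intervals (hk 0 x) (hk x (x + y)), add_sub_cancel_left]

theorem fwdDiff_integral_comp_add (hg : LocallyIntervalIntegrable g) (h a b : ℝ) :
    fwdDiff h (fun x => ∫ t in a..b, g (x + t)) = fun x => ∫ t in a..b, fwdDiff h g (x + t) := by
  funext x
  simp only [fwdDiff]
  rw [← integral_sub ((hg.comp_add_left (x + h)) a b) ((hg.comp_add_left x) a b)]
  simp only [add_right_comm x h]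

theorem fwdDiff_iter_integral_comp_add (hg : LocallyIntervalIntegrable g) (h a b : ℝ) (k : ℕ) :
    (fwdDiff h)^[k] (fun x => ∫ t in a..b, g (x + t)) =
      fun x => ∫ t in a..b, (fwdDiff h)^[k] g (x + t) := by
  induction k with
  | zero => rfl
  | succ k ih =>
    rw [Function.iterate_succ_apply', ih, fwdDiff_integral_comp_add (hg.fwdDiff_iter h k),
      Function.iterate_succ_apply']

def iterDiffQuot (y : ℝ) (k : ℕ) (f : ℝ → E) : ℝ → E :=
  (y ^ k)⁻¹ • (fwdDiff y)^[k] (iterInt f k)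

theorem LocallyIntervalIntegrable.iterDiffQuot (hf : LocallyIntervalIntegrable f) (y : ℝ)
    (k : ℕ) : LocallyIntervalIntegrable (_root_.iterDiffQuot y k f) :=
  ((hf.iterInt k).fwdDiff_iter y k).smul _

theorem iterDiffQuot_succ (hf : LocallyIntervalIntegrable f) (y : ℝ) (k : ℕ) (x : ℝ) :
    iterDiffQuot y (k + 1) f x = y⁻¹ • ∫ t in (0:ℝ)..y, iterDiffQuot y k f (x + t) := by
  simp only [iterDiffQuot, Pi.smul_apply, intervalIntegral.integral_smul, smul_smul]
  rw [Function.iterate_succ_apply, fwdDiff_iterInt_succ hf,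
    fwdDiff_iter_integral_comp_add (hf.iterInt k), pow_succ', mul_inv]

theorem inv_smul_integral_comp_add_sub [CompleteSpace E] (hf : LocallyIntervalIntegrable f) {y : ℝ} (hy : y ≠ 0)
    (c : E) (x : ℝ) :
    y⁻¹ • (∫ t in (0:ℝ)..y, f (x + t)) - c = y⁻¹ • ∫ t in (0:ℝ)..y, (f (x + t) - c) := by
  rw [integral_sub (hf.comp_add_left x 0 y) intervalIntegrable_const, intervalIntegral.integral_const, sub_zero,
    smul_sub, smul_smul, inv_mul_cancel₀ hy, one_smul]

theorem norm_inv_smul_integral_comp_add_sub_le [CompleteSpace E] {F N : ℝ → E} {G M : ℝ → ℝ}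
    (hF : LocallyIntervalIntegrable F) (hG : LocallyIntervalIntegrable G)
    (hFG : ∀ x, ‖F x - N x‖ ≤ G x - M x) (hNM : ∀ x z, x ≤ z → ‖N z - N x‖ ≤ M z - M x)
    {y : ℝ} (hy : 0 < y) (x : ℝ) :
    ‖y⁻¹ • (∫ t in (0:ℝ)..y, F (x + t)) - N x‖ ≤ y⁻¹ • (∫ t in (0:ℝ)..y, G (x + t)) - M x := by
  rw [inv_smul_integral_comp_add_sub hF hy.ne', inv_smul_integral_comp_add_sub hG hy.ne',
    norm_smul, Real.norm_of_nonneg (inv_nonneg.2 hy.le), smul_eq_mul]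
  gcongr
  refine norm_integral_le_of_norm_le hy.le (ae_of_all _ fun t ht => ?_)
    ((hG.comp_add_left x 0 y).sub intervalIntegrable_const)
  calc ‖F (x + t) - N x‖ ≤ ‖F (x + t) - N (x + t)‖ + ‖N (x + t) - N x‖ :=
        norm_sub_le_norm_sub_add_norm_sub _ _ _
    _ ≤ (G (x + t) - M (x + t)) + (M (x + t) - M x) :=
        add_le_add (hFG _) (hNM _ _ (le_add_of_nonneg_right ht.1.le))
    _ = G (x + t) - M x := sub_add_sub_cancel _ _ _

theorem norm_iterDiffQuot_sub_le [CompleteSpace E] {N : ℝ → E} {M : ℝ → ℝ} (hN : LocallyIntervalIntegrable N)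
    (hM : LocallyIntervalIntegrable M) (hNM : ∀ x z, x ≤ z → ‖N z - N x‖ ≤ M z - M x)
    {y : ℝ} (hy : 0 < y) (k : ℕ) (x : ℝ) :
    ‖iterDiffQuot y k N x - N x‖ ≤ iterDiffQuot y k M x - M x := by
  induction k generalizing x with
  | zero => simp [iterDiffQuot, iterInt]
  | succ k ih =>
    rw [iterDiffQuot_succ hN, iterDiffQuot_succ hM]
    exact norm_inv_smul_integral_comp_add_sub_le (hN.iterDiffQuot y k) (hM.iterDiffQuot y k)
      ih hNM hy x

end IteratedIntegral

theorem norm_sum_sub_sum_le_of_subset {ι E : Type*} [SeminormedAddCommGroup E] {a : ι → E}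
    {b : ι → ℝ} (hab : ∀ i, ‖a i‖ ≤ b i) {s t : Finset ι} (hst : s ⊆ t) :
    ‖∑ i ∈ t, a i - ∑ i ∈ s, a i‖ ≤ ∑ i ∈ t, b i - ∑ i ∈ s, b i := by
  classical
  rw [← Finset.sum_sdiff_eq_sub hst, ← Finset.sum_sdiff_eq_sub hst]
  exact (norm_sum_le _ _).trans (Finset.sum_le_sum fun i _ => hab i)

theorem norm_partialSumC_sub_le {a : ℕ → ℂ} {ahat : ℕ → ℝ} (hle : ∀ n, ‖a n‖ ≤ ahat n)
    {x z : ℝ} (hxz : x ≤ z) :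
    ‖partialSumC a z - partialSumC a x‖ ≤ partialSumR ahat z - partialSumR ahat x :=
  norm_sum_sub_sum_le_of_subset hle (Finset.Ico_subset_Ico_right (Nat.ceil_mono hxz))

theorem statement12_general (a : ℕ → ℂ) (ahat : ℕ → ℝ) (hle : ∀ n : ℕ, ‖a n‖ ≤ ahat n)
    (k : ℕ) (y : ℝ) (hy : 0 < y) (X : ℝ) :
    ‖((y ^ k)⁻¹ : ℂ) * (fwdDiffC y)^[k] (iterIntC (partialSumC a) k) X - partialSumC a X‖ ≤
      (y ^ k)⁻¹ * (fwdDiffR y)^[k] (iterIntR (partialSumR ahat) k) X - partialSumR ahat X := by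
  have hN : LocallyIntervalIntegrable (partialSumC a) :=
    locallyIntervalIntegrable_comp_ceil fun m => ∑ n ∈ Finset.Ico 1 m, a n
  have hM : LocallyIntervalIntegrable (partialSumR ahat) :=
    locallyIntervalIntegrable_comp_ceil fun m => ∑ n ∈ Finset.Ico 1 m, ahat n
  have h := norm_iterDiffQuot_sub_le hN hM (fun _ _ => norm_partialSumC_sub_le hle) hy k X
  simp only [iterDiffQuot, Pi.smul_apply, Complex.real_smul, Complex.ofReal_inv,
    Complex.ofReal_pow, smul_eq_mul] at h
  rwa [iterIntC_eq_iterInt, iterIntR_eq_iterInt]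

theorem statement12 (a : ℕ → ℂ) (ahat : ℕ → ℝ) (hle : ∀ n : ℕ, ‖a n‖ ≤ ahat n)
    (k : ℕ) (hk : 1 ≤ k) (y : ℝ) (hy : 0 < y) (X : ℝ) :
    ‖((y ^ k)⁻¹ : ℂ) * (fwdDiffC y)^[k] (iterIntC (partialSumC a) k) X - partialSumC a X‖ ≤
      (y ^ k)⁻¹ * (fwdDiffR y)^[k] (iterIntR (partialSumR ahat) k) X - partialSumR ahat X :=
  statement12_general a ahat hle k y hy X

end
end

section
/- (Inclusion–exclusion for Euler products over a lattice.) Let P be a finite lattice with least element ⊥ and Möbius function μ_P. Let f : P × ℕ → ℝ be a function with f(y,n) ≥ 0 for all y and n, and fix x ∈ P such that the Euler product ∏_p (1 + ∑_{y ≤ x} f(y,p)) over all primes p converges. Then ∑_{z ≤ x} μ_P(z,x) · ∏_p (1 + ∑_{y ≤ z} f(y,p)) = (∑_{z ≤ x} μ_P(z,x)) + ∑_{n ≥ 2 squarefree} ∑_{(y_p)_{p ∣ n} ∈ P^{\{p : p ∣ n\}}, ⋁_{p ∣ n} y_p = x} ∏_{p ∣ n} f(y_p, p), where the right-hand double sum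 converges. In particular, the left-hand side is positive if and only if x = ⊥ or there exists a squarefree n ≥ 2 and a tuple (y_p)_{p ∣ n} with ⋁_{p∣n} y_p = x and ∏_{p ∣ n} f(y_p,p) > 0. -/
/-!
For `z ≤ x` the Euler factor `1 + ∑_{y ≤ z} f(y, p)` is the `p`-th factor of the Euler product of
the multiplicative function `n ↦ ∏_{p ∣ n} ∑_{y ≤ z} f(y, p)` supported on squarefree `n`; its
series converges absolutely because its partial sums are bounded by the Euler product at `x`.
Expanding `∏_{p ∣ n} ∑_{y ≤ z} f(y, p)` as a sum over tuples `(y_p)` and grouping the tuples by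
their join `w ≤ z`, Möbius inversion on `P` keeps exactly the tuples with join `x`. For `n = 1`
the only tuple is empty, and that term is `∑_{z ≤ x} μ(z, x) = [x = ⊥]`.
-/

open scoped Classical

noncomputable section

open Finset

theorem prod_le_tprod_of_one_le {ι : Type*} {g : ι → ℝ} (hg : ∀ i, 1 ≤ g i)
    (h : Multipliable g) (s : Finset ι) : ∏ i ∈ s, g i ≤ ∏' i, g i :=
  ge_of_tendsto h.hasProd <| Filter.eventually_atTop.2 ⟨s, fun _ hst =>
    prod_le_prod_of_subset_of_one_le hst (fun i _ => zero_le_one.trans (hg i)) fun i _ _ => hg i⟩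

theorem tsum_pos_iff_exists_pos {ι : Type*} {g : ι → ℝ} (hs : Summable g) (hg : ∀ i, 0 ≤ g i) :
    0 < ∑' i, g i ↔ ∃ i, 0 < g i := by
  refine ⟨fun h => ?_, fun ⟨i, hi⟩ => hs.tsum_pos hg i hi⟩
  by_contra! h'
  have : g = 0 := funext fun i => le_antisymm (h' i) (hg i)
  simp [this] at h

section MoebiusInversion

variable {P : Type*} [PartialOrder P] [Fintype P]

def IsMoebiusFunction (μ : P → P → ℤ) : Prop :=
  ∀ y x : P, y ≤ x →
    (∑ z ∈ Finset.univ.filter (fun z : P => y ≤ z ∧ z ≤ x), μ z x) = if y = x then 1 else 0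

variable {μ : P → P → ℤ} (hμ : IsMoebiusFunction μ)
include hμ

theorem sum_moebius_mul_sum_le (s : P → ℝ) (x : P) :
    ∑ z ∈ univ.filter (· ≤ x), (μ z x : ℝ) * ∑ w ∈ univ.filter (· ≤ z), s w = s x := by
  calc _ = ∑ w ∈ univ.filter (· ≤ x),
        s w * ∑ z ∈ univ.filter (fun z => w ≤ z ∧ z ≤ x), (μ z x : ℝ) := by
        simp_rw [mul_sum]
        refine sum_comm' (fun z w => ?_) |>.trans (sum_congr rfl fun w _ => sum_congr rfl
          fun z _ => mul_comm _ _)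
        simp only [mem_filter, mem_univ, true_and]
        exact ⟨fun h => ⟨⟨h.2, h.1⟩, h.2.trans h.1⟩, fun h => ⟨h.1.2, h.1.1⟩⟩
    _ = ∑ w ∈ univ.filter (· ≤ x), if w = x then s w else 0 := by
        refine sum_congr rfl fun w hw => ?_
        rw [← Int.cast_sum, hμ w x (mem_filter.1 hw).2]
        split_ifs <;> simp
    _ = s x := by simp

theorem sum_moebius_eq_ite_bot [OrderBot P] (x : P) :
    ∑ z ∈ univ.filter (· ≤ x), (μ z x : ℝ) = if x = ⊥ then 1 else 0 := by
  simpa [eq_comm] using sum_moebius_mul_sum_le hμ (fun w => if w = ⊥ then 1 else 0) x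

end MoebiusInversion

section JoinExpansion

variable {P : Type*} [Lattice P] [OrderBot P] [Fintype P] {ι : Type*} [Fintype ι] [DecidableEq ι]

def joinSum (g : ι → P → ℝ) (w : P) : ℝ :=
  ∑ c ∈ (univ : Finset (ι → P)).filter (fun c => univ.sup c = w), ∏ i, g i (c i)

theorem prod_sum_le_eq_sum_joinSum (g : ι → P → ℝ) (z : P) :
    ∏ i, ∑ y ∈ univ.filter (· ≤ z), g i y = ∑ w ∈ univ.filter (· ≤ z), joinSum g w := by
  rw [← sum_prod_piFinset, ← sum_fiberwise_of_maps_to (g := fun c => univ.sup c)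
    (t := univ.filter (· ≤ z)) (by simp [Finset.sup_le_iff])]
  refine sum_congr rfl fun w hw => sum_congr (Finset.ext fun c => ?_) fun _ _ => rfl
  simp only [mem_filter, Fintype.mem_piFinset, mem_univ, true_and] at hw ⊢
  exact ⟨And.right, fun h => ⟨fun i => h ▸ le_sup (mem_univ i) |>.trans hw, h⟩⟩

theorem sum_moebius_mul_prod_sum_le {μ : P → P → ℤ} (hμ : IsMoebiusFunction μ)
    (g : ι → P → ℝ) (x : P) :
    ∑ z ∈ univ.filter (· ≤ x), (μ z x : ℝ) * ∏ i, ∑ y ∈ univ.filter (· ≤ z), g i y =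
      joinSum g x := by
  simp_rw [prod_sum_le_eq_sum_joinSum]
  exact sum_moebius_mul_sum_le hμ _ x

theorem joinSum_nonneg {g : ι → P → ℝ} (hg : ∀ i y, 0 ≤ g i y) (w : P) : 0 ≤ joinSum g w :=
  sum_nonneg fun _ _ => prod_nonneg fun _ _ => hg _ _

theorem joinSum_pos_iff {g : ι → P → ℝ} (hg : ∀ i y, 0 ≤ g i y) (w : P) :
    0 < joinSum g w ↔ ∃ c : ι → P, univ.sup c = w ∧ 0 < ∏ i, g i (c i) := by
  rw [joinSum, sum_pos_iff_of_nonneg fun _ _ => prod_nonneg fun _ _ => hg _ _]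
  simp

end JoinExpansion

section SquarefreeProd

variable (S : ℕ → ℝ)

def squarefreeProd (n : ℕ) : ℝ := if Squarefree n then ∏ p ∈ n.primeFactors, S p else 0

variable {S}

theorem squarefreeProd_nonneg (hS : ∀ p, 0 ≤ S p) (n : ℕ) : 0 ≤ squarefreeProd S n := by
  unfold squarefreeProd
  split_ifs
  exacts [prod_nonneg fun p _ => hS p, le_rfl]

theorem squarefreeProd_le_squarefreeProd {T : ℕ → ℝ} (hS : ∀ p, 0 ≤ S p) (hST : ∀ p, S p ≤ T p)
    (n : ℕ) : squarefreeProd S n ≤ squarefreeProd T n := by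
  unfold squarefreeProd
  split_ifs
  exacts [prod_le_prod (fun p _ => hS p) fun p _ => hST p, le_rfl]

theorem squarefreeProd_mul {m n : ℕ} (h : m.Coprime n) :
    squarefreeProd S (m * n) = squarefreeProd S m * squarefreeProd S n := by
  rcases eq_or_ne m 0 with rfl | hm
  · simp [squarefreeProd, (Nat.coprime_zero_left n).1 h]
  rcases eq_or_ne n 0 with rfl | hn
  · simp [squarefreeProd, (Nat.coprime_zero_right m).1 h]
  simp only [squarefreeProd, Nat.squarefree_mul h, Nat.primeFactors_mul hm hn,
    prod_union h.disjoint_primeFactors]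
  split_ifs <;> simp_all

theorem tsum_squarefreeProd_prime_pow (p : Nat.Primes) :
    ∑' e, squarefreeProd S ((p : ℕ) ^ e) = 1 + S p := by
  rw [tsum_eq_sum (s := {0, 1}) fun e he => ?_]
  · simp [squarefreeProd, p.2.squarefree, p.2.primeFactors]
  · have : ¬ Squarefree ((p : ℕ) ^ e) := by
      rw [Nat.squarefree_pow_iff p.2.ne_one (by grind)]
      grind
    simp [squarefreeProd, this]

theorem sum_squarefreeProd_le_tprod (hS : ∀ p, 0 ≤ S p)
    (hconv : Multipliable fun p : Nat.Primes => 1 + S p) (A : Finset ℕ) :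
    ∑ n ∈ A, squarefreeProd S n ≤ ∏' p : Nat.Primes, (1 + S p) := by
  set B := (A.filter Squarefree).biUnion Nat.primeFactors
  have hB : ∀ q ∈ B, q.Prime := by
    simp only [B, mem_biUnion]
    exact fun q ⟨n, _, hq⟩ => Nat.prime_of_mem_primeFactors hq
  calc ∑ n ∈ A, squarefreeProd S n
      = ∑ t ∈ (A.filter Squarefree).image Nat.primeFactors, ∏ p ∈ t, S p := by
        rw [sum_image fun a ha b hb hab => ?_, sum_filter]
        · rfl
        rw [← Nat.prod_primeFactors_of_squarefree (mem_filter.1 ha).2,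
          ← Nat.prod_primeFactors_of_squarefree (mem_filter.1 hb).2, hab]
    _ ≤ ∑ t ∈ B.powerset, ∏ p ∈ t, S p :=
        sum_le_sum_of_subset_of_nonneg
          (image_subset_iff.2 fun n hn => mem_powerset.2 (subset_biUnion_of_mem _ hn))
          fun t _ _ => prod_nonneg fun p _ => hS p
    _ = ∏ p ∈ B.subtype Nat.Prime, (1 + S p) := by
        rw [prod_subtype_eq_prod_filter (f := fun p => 1 + S p), filter_true_of_mem hB,
          prod_one_add]
    _ ≤ ∏' p : Nat.Primes, (1 + S p) :=
        prod_le_tprod_of_one_le (fun p : Nat.Primes => le_add_of_nonneg_right (hS p)) hconv _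

theorem summable_squarefreeProd (hS : ∀ p, 0 ≤ S p)
    (hconv : Multipliable fun p : Nat.Primes => 1 + S p) : Summable (squarefreeProd S) :=
  summable_of_sum_le (squarefreeProd_nonneg hS) (sum_squarefreeProd_le_tprod hS hconv)

theorem hasProd_one_add_tsum_squarefreeProd (hS : ∀ p, 0 ≤ S p)
    (hsum : Summable (squarefreeProd S)) :
    HasProd (fun p : Nat.Primes => 1 + S p) (∑' n, squarefreeProd S n) := by
  simpa only [tsum_squarefreeProd_prime_pow] using
    EulerProduct.eulerProduct_hasProd (by simp [squarefreeProd]) squarefreeProd_mul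
      (hsum.congr fun n => (Real.norm_of_nonneg (squarefreeProd_nonneg hS n)).symm)
      (by simp [squarefreeProd])

end SquarefreeProd

theorem hasSum_squarefreeProd_sum_le {P : Type*} [Preorder P] [Fintype P] {f : P → ℕ → ℝ}
    (hf : ∀ y n, 0 ≤ f y n) {x : P}
    (hconv : Multipliable fun p : Nat.Primes =>
      1 + ∑ y ∈ Finset.univ.filter (fun y : P => y ≤ x), f y (p : ℕ))
    {z : P} (hz : z ≤ x) :
    HasSum (squarefreeProd fun p => ∑ y ∈ univ.filter (· ≤ z), f y p)
      (∏' p : Nat.Primes, (1 + ∑ y ∈ univ.filter (· ≤ z), f y (p : ℕ))) := by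
  have hS : ∀ z p, 0 ≤ ∑ y ∈ univ.filter (· ≤ z), f y p := fun z p => sum_nonneg fun y _ => hf y p
  have hsum := (summable_squarefreeProd (hS x) hconv).of_nonneg_of_le (squarefreeProd_nonneg (hS z))
    (squarefreeProd_le_squarefreeProd (hS z) fun p => sum_le_sum_of_subset_of_nonneg
      (fun y => by simpa using fun hy : y ≤ z => hy.trans hz) fun y _ _ => hf y p)
  rw [(hasProd_one_add_tsum_squarefreeProd (hS z) hsum).tprod_eq]
  exact hsum.hasSum

section InclusionExclusion

variable {P : Type*} [Lattice P] [OrderBot P] [Fintype P] {μ : P → P → ℤ} {f : P → ℕ → ℝ}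

def joinSeries (f : P → ℕ → ℝ) (x : P) (n : ℕ) : ℝ :=
  if 2 ≤ n ∧ Squarefree n then joinSum (fun p : n.primeFactors => fun y => f y p) x else 0

variable (x : P)

theorem joinSeries_nonneg (hf : ∀ y n, 0 ≤ f y n) (n : ℕ) : 0 ≤ joinSeries f x n := by
  unfold joinSeries
  split_ifs
  exacts [joinSum_nonneg (fun _ _ => hf _ _) x, le_rfl]

theorem joinSeries_pos_iff (hf : ∀ y n, 0 ≤ f y n) (n : ℕ) :
    0 < joinSeries f x n ↔ 2 ≤ n ∧ Squarefree n ∧ ∃ c : n.primeFactors → P,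
      Finset.univ.sup c = x ∧ 0 < ∏ p : n.primeFactors, f (c p) (p : ℕ) := by
  unfold joinSeries
  split_ifs with hn
  · simp [hn, joinSum_pos_iff (fun _ _ => hf _ _)]
  · simp only [lt_irrefl, false_iff]
    tauto

theorem sum_moebius_mul_squarefreeProd_of_ne_one (hμ : IsMoebiusFunction μ) {n : ℕ} (hn : n ≠ 1) :
    ∑ z ∈ univ.filter (· ≤ x),
        (μ z x : ℝ) * squarefreeProd (fun p => ∑ y ∈ univ.filter (· ≤ z), f y p) n =
      joinSeries f x n := by
  have h2 : 2 ≤ n ∧ Squarefree n ↔ Squarefree n :=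
    and_iff_right_of_imp fun h => by have := h.ne_zero; omega
  unfold squarefreeProd joinSeries
  simp only [h2]
  split_ifs
  · simp_rw [← prod_coe_sort n.primeFactors]
    exact sum_moebius_mul_prod_sum_le hμ _ x
  · simp

theorem hasSum_joinSeries (hμ : IsMoebiusFunction μ) (hf : ∀ y n, 0 ≤ f y n)
    (hconv : Multipliable fun p : Nat.Primes =>
      1 + ∑ y ∈ Finset.univ.filter (fun y : P => y ≤ x), f y (p : ℕ)) :
    HasSum (joinSeries f x)
      ((∑ z ∈ Finset.univ.filter (fun z : P => z ≤ x), (μ z x : ℝ) *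
          ∏' p : Nat.Primes, (1 + ∑ y ∈ Finset.univ.filter (fun y : P => y ≤ z), f y (p : ℕ))) -
        ∑ z ∈ Finset.univ.filter (fun z : P => z ≤ x), (μ z x : ℝ)) := by
  have hW := hasSum_sum fun z (hz : z ∈ univ.filter (· ≤ x)) =>
    (hasSum_squarefreeProd_sum_le hf hconv (mem_filter.1 hz).2).mul_left (μ z x : ℝ)
  -- the `n = 1` term `∑ z ≤ x, μ z x` is split off the series
  have hupdate : joinSeries f x = Function.update (fun n => ∑ z ∈ univ.filter (· ≤ x),
      (μ z x : ℝ) * squarefreeProd (fun p => ∑ y ∈ univ.filter (· ≤ z), f y p) n) 1 0 := by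
    funext n
    rcases eq_or_ne n 1 with rfl | hn
    · simp [joinSeries]
    · rw [Function.update_of_ne hn, sum_moebius_mul_squarefreeProd_of_ne_one x hμ hn]
  rw [hupdate]
  simpa [squarefreeProd, sub_eq_neg_add] using hW.update 1 0

end InclusionExclusion

theorem statement13 (P : Type) [Lattice P] [OrderBot P] [Fintype P]
    -- `μ` is the Möbius function of the lattice `P`
    (μ : P → P → ℤ)
    (hμ : ∀ y x : P, y ≤ x →
      (∑ z ∈ Finset.univ.filter (fun z : P => y ≤ z ∧ z ≤ x), μ z x) =
        if y = x then 1 else 0)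
    -- nonnegative weights
    (f : P → ℕ → ℝ) (hf : ∀ y n, 0 ≤ f y n)
    (x : P)
    -- convergence of the Euler product `∏_p (1 + ∑_{y ≤ x} f(y, p))`
    (hconv : Multipliable fun p : Nat.Primes =>
      1 + ∑ y ∈ Finset.univ.filter (fun y : P => y ≤ x), f y (p : ℕ)) :
    -- the right-hand double series converges
    (Summable fun n : ℕ =>
      if 2 ≤ n ∧ Squarefree n then
        ∑ c ∈ (Finset.univ : Finset (n.primeFactors → P)).filter
            (fun c => Finset.univ.sup c = x),
          ∏ p : n.primeFactors, f (c p) (p : ℕ)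
      else 0) ∧
    -- the inclusion–exclusion identity
    ((∑ z ∈ Finset.univ.filter (fun z : P => z ≤ x), (μ z x : ℝ) *
        ∏' p : Nat.Primes, (1 + ∑ y ∈ Finset.univ.filter (fun y : P => y ≤ z), f y (p : ℕ))) =
      (∑ z ∈ Finset.univ.filter (fun z : P => z ≤ x), (μ z x : ℝ)) +
        ∑' n : ℕ,
          (if 2 ≤ n ∧ Squarefree n then
            ∑ c ∈ (Finset.univ : Finset (n.primeFactors → P)).filter
                (fun c => Finset.univ.sup c = x),
              ∏ p : n.primeFactors, f (c p) (p : ℕ)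
          else 0)) ∧
    -- positivity criterion
    ((0 < ∑ z ∈ Finset.univ.filter (fun z : P => z ≤ x), (μ z x : ℝ) *
        ∏' p : Nat.Primes, (1 + ∑ y ∈ Finset.univ.filter (fun y : P => y ≤ z), f y (p : ℕ))) ↔
      (x = ⊥ ∨ ∃ n : ℕ, 2 ≤ n ∧ Squarefree n ∧ ∃ c : n.primeFactors → P,
        Finset.univ.sup c = x ∧ 0 < ∏ p : n.primeFactors, f (c p) (p : ℕ))) := by
  have hR := hasSum_joinSeries x hμ hf hconv
  have hL := eq_add_of_sub_eq' hR.tsum_eq.symm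
  refine ⟨hR.summable, hL, ?_⟩
  rw [hL, sum_moebius_eq_ite_bot hμ x]
  split_ifs with hx
  · simpa [hx] using add_pos_of_pos_of_nonneg one_pos (tsum_nonneg (joinSeries_nonneg x hf))
  · simp only [hx, false_or, zero_add, tsum_pos_iff_exists_pos hR.summable (joinSeries_nonneg x hf),
      joinSeries_pos_iff x hf]
end
end
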